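/- Gentle Measurement Lemma: for every density matrix ρ and every operator X with 0 ⪯ X ⪯ I on a finite-dimensional Hilbert space, ‖ρ − √X ρ √X‖₁ ≤ 2√(Tr(ρ(I − X))). -/

import Mathlib

/-!
Write `P = √X`. Then `ρ - PρP = (1 - P)ρ + Pρ(1 - P)`, and the trace norm of this Hermitian
matrix is `Re Tr(S(ρ - PρP))` for the unitary `S = sign(ρ - PρP)`. Cauchy–Schwarz for the
`ρ`-weighted inner product `⟪A, B⟫ = Tr(BρAᴴ)` bounds each term by `√Tr((1 - P)ρ(1 - P))`
(using `Tr(PρP) = Tr(Xρ) ≤ Tr ρ = 1`), and the scalar inequality `(1 - √x)² ≤ 1 - x` on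
`[0, 1]`, lifted through the functional calculus, gives `Tr((1 - P)ρ(1 - P)) ≤ Tr(ρ(1 - X))`.
-/

open Matrix ComplexOrder

/-- The positive semidefinite square root of a positive semidefinite matrix
(the definition removed from Mathlib, restored verbatim). -/
noncomputable def Matrix.PosSemidef.sqrt {n 𝕜 : Type*} [Fintype n] [DecidableEq n] [RCLike 𝕜]
    {A : Matrix n n 𝕜} (hA : A.PosSemidef) : Matrix n n 𝕜 :=
  hA.1.eigenvectorUnitary.1 * diagonal ((↑) ∘ (√·) ∘ hA.1.eigenvalues) *
    (star hA.1.eigenvectorUnitary : Matrix n n 𝕜)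

/-- Trace norm of a complex matrix: trace of the positive square root of `Mᴴ * M`. -/
noncomputable def traceNorm {n : Type*} [Fintype n] [DecidableEq n] (M : Matrix n n ℂ) : ℝ :=
  ((Matrix.posSemidef_conjTranspose_mul_self M).sqrt.trace).re

open scoped MatrixOrder

namespace CFC

variable {A : Type*} [PartialOrder A] [Ring A] [StarRing A] [TopologicalSpace A]
  [StarOrderedRing A] [Algebra ℝ A] [ContinuousFunctionalCalculus ℝ A IsSelfAdjoint]
  [NonnegSpectrumClass ℝ A] [IsSemitopologicalRing A] [T2Space A]

lemma one_sub_sqrt_sq_le {a : A} (ha₀ : 0 ≤ a) (ha₁ : a ≤ 1) :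
    (1 - CFC.sqrt a) ^ 2 ≤ 1 - a := by
  have hspec : ∀ x ∈ spectrum ℝ a, x ≤ 1 :=
    (le_algebraMap_iff_spectrum_le (r := (1 : ℝ))).mp (by simpa using ha₁)
  calc (1 - CFC.sqrt a) ^ 2 = cfc (fun x : ℝ => (1 - √x) ^ 2) a := by
        rw [CFC.sqrt_eq_real_sqrt a, cfcₙ_eq_cfc, cfc_pow _ _ a, cfc_sub _ _ a,
          cfc_const_one ℝ a]
    _ ≤ cfc (fun x : ℝ => 1 - x) a := by
        refine cfc_mono fun x hx => ?_
        have hx₀ := spectrum_nonneg_of_nonneg ha₀ hx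
        have hsq := Real.sq_sqrt hx₀
        have hle : √x ≤ 1 := Real.sqrt_le_one.mpr (hspec x hx)
        nlinarith [Real.sqrt_nonneg x]
    _ = 1 - a := by rw [cfc_sub _ _ a, cfc_const_one ℝ a, cfc_id' ℝ a]

end CFC

namespace Matrix

variable {n : Type*} [Fintype n]

lemma PosSemidef.sqrt_eq_cfcSqrt [DecidableEq n] {𝕜 : Type*} [RCLike 𝕜] {A : Matrix n n 𝕜}
    (hA : A.PosSemidef) : hA.sqrt = CFC.sqrt A := by
  rw [CFC.sqrt_eq_cfc, cfc_nnreal_eq_real _ A, hA.1.cfc_eq]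
  simp only [IsHermitian.cfc, PosSemidef.sqrt, Unitary.conjStarAlgAut_apply]
  congr 3
  funext i
  simp [Real.coe_sqrt, max_eq_left (hA.eigenvalues_nonneg i)]

lemma traceNorm_eq_re_trace_abs [DecidableEq n] (M : Matrix n n ℂ) :
    traceNorm M = (CFC.abs M).trace.re := by
  rw [traceNorm, PosSemidef.sqrt_eq_cfcSqrt, CFC.abs, star_eq_conjTranspose]

lemma IsHermitian.exists_mem_unitaryGroup_mul_eq_abs [DecidableEq n] {M : Matrix n n ℂ}
    (hM : M.IsHermitian) : ∃ S ∈ unitaryGroup n ℂ, S * M = CFC.abs M := by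
  set sign : ℝ → ℝ := fun x => if x < 0 then -1 else 1
  -- `sign` is discontinuous, but the spectrum of a matrix is finite; the `cfc` lemmas below
  -- find `hcont` by `assumption`.
  have hcont : ContinuousOn sign (spectrum ℝ M) := M.finite_real_spectrum.continuousOn sign
  refine ⟨cfc sign M, ?_, ?_⟩
  · rw [mem_unitaryGroup_iff', cfc_predicate sign M, ← cfc_mul _ _ M]
    exact (cfc_congr fun x _ => by simp only [sign]; split_ifs <;> norm_num).trans
      (cfc_const_one ℝ M)
  · nth_rw 2 [← cfc_id' ℝ M]
    rw [← cfc_mul _ _ M, CFC.abs_eq_cfc_norm M]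
    exact cfc_congr fun x _ => by
      simp only [sign, Real.norm_eq_abs]; split_ifs with h
      · simp [abs_of_neg h]
      · simp [abs_of_nonneg (not_lt.mp h)]

lemma norm_trace_mul_mul_le {ρ : Matrix n n ℂ} (hρ : ρ.PosSemidef) (A B : Matrix n n ℂ) :
    ‖(A * ρ * B).trace‖ ≤ √(A * ρ * Aᴴ).trace.re * √(Bᴴ * ρ * B).trace.re := by
  let := ρ.toMatrixSeminormedAddCommGroup hρ
  let := ρ.toMatrixInnerProductSpace hρ
  have h := norm_inner_le_norm (𝕜 := ℂ) Bᴴ A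
  rw [norm_eq_sqrt_re_inner (𝕜 := ℂ) A, norm_eq_sqrt_re_inner (𝕜 := ℂ) Bᴴ, mul_comm] at h
  have h' : ‖(A * ρ * Bᴴᴴ).trace‖ ≤
      √(RCLike.re (A * ρ * Aᴴ).trace) * √(RCLike.re (Bᴴ * ρ * Bᴴᴴ).trace) := h
  simpa only [conjTranspose_conjTranspose, RCLike.re_to_complex] using h'

lemma re_trace_mul_le_of_le [DecidableEq n] {ρ C D : Matrix n n ℂ} (hρ : ρ.PosSemidef)
    (hCD : C ≤ D) : (C * ρ).trace.re ≤ (D * ρ).trace.re := by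
  obtain ⟨Y, hY⟩ := CStarAlgebra.nonneg_iff_eq_star_mul_self.mp (sub_nonneg.mpr hCD)
  have h := (RCLike.nonneg_iff.mp (hρ.mul_mul_conjTranspose_same Y).trace_nonneg).1
  rw [trace_mul_cycle, ← star_eq_conjTranspose, ← hY, sub_mul, trace_sub, map_sub,
    RCLike.re_to_complex, RCLike.re_to_complex] at h
  linarith

lemma norm_trace_unitary_mul_mul_le [DecidableEq n] {ρ S : Matrix n n ℂ} (hρ : ρ.PosSemidef)
    (hS : S ∈ unitaryGroup n ℂ) (A B : Matrix n n ℂ) :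
    ‖(S * A * ρ * B).trace‖ ≤ √(A * ρ * Aᴴ).trace.re * √(Bᴴ * ρ * B).trace.re := by
  have hSA : (S * A * ρ * (S * A)ᴴ).trace = (A * ρ * Aᴴ).trace := by
    calc (S * A * ρ * (S * A)ᴴ).trace = (S * (A * ρ * Aᴴ) * star S).trace := by
          simp only [conjTranspose_mul, star_eq_conjTranspose, mul_assoc]
      _ = (A * ρ * Aᴴ).trace := by
          rw [trace_mul_cycle, mem_unitaryGroup_iff'.mp hS, one_mul]
  simpa only [hSA] using norm_trace_mul_mul_le hρ (S * A) B

section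

variable [DecidableEq n] {ρ X : Matrix n n ℂ}

lemma re_trace_sqrt_mul_mul_le (hρ : ρ.PosSemidef) (hX : 0 ≤ X) (hX1 : X ≤ 1) :
    (CFC.sqrt X * ρ * CFC.sqrt X).trace.re ≤ ρ.trace.re := by
  rw [trace_mul_cycle, CFC.sqrt_mul_sqrt_self X hX]
  simpa only [one_mul] using re_trace_mul_le_of_le hρ hX1

lemma re_trace_one_sub_sqrt_mul_mul_le (hρ : ρ.PosSemidef) (hX : 0 ≤ X) (hX1 : X ≤ 1) :
    ((1 - CFC.sqrt X) * ρ * (1 - CFC.sqrt X)).trace.re ≤ (ρ * (1 - X)).trace.re := by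
  rw [trace_mul_cycle, ← sq, trace_mul_comm ρ]
  exact re_trace_mul_le_of_le hρ (CFC.one_sub_sqrt_sq_le hX hX1)

end

end Matrix

open Matrix in
/-- Gentle Measurement Lemma: for a density matrix `ρ` and `0 ⪯ X ⪯ I`,
`‖ρ − √X ρ √X‖₁ ≤ 2√(Tr(ρ(I − X)))`. -/
theorem stmt1 {n : ℕ} (ρ X : Matrix (Fin n) (Fin n) ℂ)
    (hρ : ρ.PosSemidef) (htr : ρ.trace = 1)
    (hX : X.PosSemidef) (hX1 : (1 - X).PosSemidef) :
    traceNorm (ρ - hX.sqrt * ρ * hX.sqrt) ≤ 2 * Real.sqrt ((ρ * (1 - X)).trace.re) := by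
  rw [hX.sqrt_eq_cfcSqrt]
  set P := CFC.sqrt X
  set t := (ρ * (1 - X)).trace.re
  have hPh : Pᴴ = P := (CFC.sqrt_nonneg X).isSelfAdjoint.star_eq
  have h1Ph : (1 - P)ᴴ = 1 - P := by rw [conjTranspose_sub, conjTranspose_one, hPh]
  have hM : (ρ - P * ρ * P).IsHermitian := by
    simpa only [hPh] using hρ.1.sub (hρ.mul_mul_conjTranspose_same P).1
  obtain ⟨S, hS, hSM⟩ := hM.exists_mem_unitaryGroup_mul_eq_abs
  have hQ : ((1 - P) * ρ * (1 - P)).trace.re ≤ t :=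
    re_trace_one_sub_sqrt_mul_mul_le hρ hX.nonneg (le_iff.mpr hX1)
  have hPρ : (P * ρ * P).trace.re ≤ 1 := by
    simpa [htr] using re_trace_sqrt_mul_mul_le hρ hX.nonneg (le_iff.mpr hX1)
  have hρ1 : ((1 : Matrix (Fin n) (Fin n) ℂ)ᴴ * ρ * 1).trace.re = 1 := by simp [htr]
  calc traceNorm (ρ - P * ρ * P)
      = (S * (1 - P) * ρ * 1).trace.re + (S * P * ρ * (1 - P)).trace.re := by
        rw [traceNorm_eq_re_trace_abs, ← hSM, ← Complex.add_re, ← trace_add]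
        congr 3; noncomm_ring
    _ ≤ ‖(S * (1 - P) * ρ * 1).trace‖ + ‖(S * P * ρ * (1 - P)).trace‖ :=
        add_le_add (Complex.re_le_norm _) (Complex.re_le_norm _)
    _ ≤ √t * √1 + √1 * √t := by
        gcongr
        · refine (norm_trace_unitary_mul_mul_le hρ hS (1 - P) 1).trans ?_
          rw [h1Ph, hρ1]
          gcongr
        · refine (norm_trace_unitary_mul_mul_le hρ hS P (1 - P)).trans ?_
          rw [hPh, h1Ph]
          gcongr
    _ = 2 * √t := by rw [Real.sqrt_one]; ring
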